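/- arXiv:math/0402317 — 2 statements merged into one kernel-verified Lean document; each statement's English description precedes it below -/
import Mathlib

section
/- Let A be a positive-definite symmetric linear transformation on ℝⁿ and set f(x) = exp(−π ⟨A x, x⟩). Then for all ξ ∈ ℝⁿ, the Fourier transform of f is f̂(ξ) = (det A)^{−1/2} · exp(−π ⟨A⁻¹ ξ, ξ⟩). -/
/-! In an orthonormal eigenbasis of `A`, with eigenvalues `μᵢ > 0` and `ηᵢ` the coordinates of `ξ`,
the integral becomes a product of one-dimensional Gaussian integrals
`∫ exp (-π μᵢ t² - 2πi ηᵢ t) dt = μᵢ^(-1/2) exp (-π ηᵢ² / μᵢ)`, the change of coordinates being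
volume preserving. The product is `(det A)^(-1/2) exp (-π ⟨A⁻¹ ξ, ξ⟩)` because `det A = ∏ μᵢ` and
`⟨A⁻¹ ξ, ξ⟩ = ∑ ηᵢ² / μᵢ`. -/

open MeasureTheory Real
open scoped RealInnerProductSpace

noncomputable section

/-- The Fourier transform of `f : ℝⁿ → ℂ`:
`f̂ ξ = ∫ x, f x · exp (−2πi x·ξ)`. -/
def FT {n : ℕ} (f : EuclideanSpace ℝ (Fin n) → ℂ) (ξ : EuclideanSpace ℝ (Fin n)) : ℂ :=
  ∫ x : EuclideanSpace ℝ (Fin n),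
    f x * Complex.exp (-2 * (Real.pi : ℂ) * Complex.I * (⟪x, ξ⟫ : ℂ))

/-- `A : ℝⁿ → ℝⁿ` linear is symmetric and positive-definite. -/
def IsPosDefSymm {n : ℕ}
    (A : EuclideanSpace ℝ (Fin n) →ₗ[ℝ] EuclideanSpace ℝ (Fin n)) : Prop :=
  (∀ x y, ⟪A x, y⟫ = ⟪x, A y⟫) ∧ (∀ x, x ≠ 0 → 0 < ⟪A x, x⟫)

/-- The building block `x ↦ x^α · exp (−⟨A x, x⟩ + b·x)`. -/
def buildingBlock {n : ℕ} (α : Fin n → ℕ)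
    (A : EuclideanSpace ℝ (Fin n) →ₗ[ℝ] EuclideanSpace ℝ (Fin n)) (b : Fin n → ℂ) :
    EuclideanSpace ℝ (Fin n) → ℂ :=
  fun x => (∏ j, (x j : ℂ) ^ α j) *
    Complex.exp (-(((⟪A x, x⟫ : ℝ)) : ℂ) + ∑ j, b j * (x j : ℂ))

/-- A function `f : ℝⁿ → ℂ` is nice if it is a complex linear combination of
building blocks `x ↦ x^α · exp (−⟨A x, x⟩ + b·x)` with `A` positive-definite
symmetric. -/
def IsNice {n : ℕ} (f : EuclideanSpace ℝ (Fin n) → ℂ) : Prop :=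
  f ∈ Submodule.span ℂ {g : EuclideanSpace ℝ (Fin n) → ℂ |
    ∃ α A b, IsPosDefSymm A ∧ g = buildingBlock α A b}

/-- The partial derivative in the `j`-th coordinate direction. -/
def pderivCoord {n : ℕ} (j : Fin n) (f : EuclideanSpace ℝ (Fin n) → ℂ) :
    EuclideanSpace ℝ (Fin n) → ℂ :=
  fun x => fderiv ℝ f x (EuclideanSpace.single j 1)

/-- The mixed partial derivative `∂^{δ(α)}/∂x^α`, with `α j` derivatives in
the `j`-th coordinate direction. -/
def mixedDeriv {n : ℕ} (α : Fin n → ℕ) (f : EuclideanSpace ℝ (Fin n) → ℂ) :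
    EuclideanSpace ℝ (Fin n) → ℂ :=
  (List.finRange n).foldr (fun j g => (pderivCoord j)^[α j] g) f


/-- The inverse Fourier transform `φ̌ x = ∫ ξ, φ ξ · exp (2πi ξ·x)`. -/
def invFT {n : ℕ} (φ : EuclideanSpace ℝ (Fin n) → ℂ) (x : EuclideanSpace ℝ (Fin n)) : ℂ :=
  ∫ ξ : EuclideanSpace ℝ (Fin n),
    φ ξ * Complex.exp (2 * (Real.pi : ℂ) * Complex.I * (⟪ξ, x⟫ : ℂ))

end
theorem OrthonormalBasis.real_inner_eq_sum_repr_mul {ι E : Type*} [Fintype ι]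
    [NormedAddCommGroup E] [InnerProductSpace ℝ E] (b : OrthonormalBasis ι ℝ E) (x y : E) :
    ⟪x, y⟫ = ∑ i, b.repr x i * b.repr y i := by
  rw [← b.repr.inner_map_map, PiLp.inner_apply]
  simp [mul_comm]

theorem OrthonormalBasis.integral_comp_repr {ι E F : Type*} [Fintype ι]
    [NormedAddCommGroup E] [InnerProductSpace ℝ E] [FiniteDimensional ℝ E]
    [MeasurableSpace E] [BorelSpace E] [NormedAddCommGroup F] [NormedSpace ℝ F]
    (b : OrthonormalBasis ι ℝ E) (g : (ι → ℝ) → F) :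
    ∫ x : E, g (fun i => b.repr x i) = ∫ v : ι → ℝ, g v :=
  ((EuclideanSpace.volume_preserving_symm_measurableEquiv_toLp ι).comp
    b.measurePreserving_measurableEquiv).integral_comp'
    (f := b.measurableEquiv.trans (MeasurableEquiv.toLp 2 (ι → ℝ)).symm) g

namespace LinearMap.IsSymmetric

variable {E : Type*} [NormedAddCommGroup E] [InnerProductSpace ℝ E] [FiniteDimensional ℝ E]
  {A : E →ₗ[ℝ] E} {n : ℕ} (hA : A.IsSymmetric) (hn : Module.finrank ℝ E = n)

theorem inner_apply_self_eq_sum_eigenvalues_mul_sq (x : E) :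
    ⟪A x, x⟫ = ∑ i, hA.eigenvalues hn i * (hA.eigenvectorBasis hn).repr x i ^ 2 := by
  simp only [(hA.eigenvectorBasis hn).real_inner_eq_sum_repr_mul,
    hA.eigenvectorBasis_apply_self_apply, RCLike.ofReal_real_eq_id, id_eq, sq, mul_assoc]

theorem eigenvalues_pos_of_inner_pos (hpos : ∀ x, x ≠ 0 → 0 < ⟪A x, x⟫) (i : Fin n) :
    0 < hA.eigenvalues hn i := by
  have hv := (hA.eigenvectorBasis hn).orthonormal.1 i
  have := hpos _ ((hA.eigenvectorBasis hn).orthonormal.ne_zero i)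
  rwa [hA.apply_eigenvectorBasis, real_inner_smul_left, real_inner_self_eq_norm_sq, hv,
    one_pow, mul_one] at this

theorem inner_apply_self_eq_sum_sq_div_eigenvalues (hpos : ∀ x, x ≠ 0 → 0 < ⟪A x, x⟫)
    {B : E →ₗ[ℝ] E} (hAB : A ∘ₗ B = LinearMap.id) (y : E) :
    ⟪B y, y⟫ = ∑ i, (hA.eigenvectorBasis hn).repr y i ^ 2 / hA.eigenvalues hn i := by
  have hABy : A (B y) = y := LinearMap.congr_fun hAB y
  calc ⟪B y, y⟫ = ⟪A (B y), B y⟫ := by rw [real_inner_comm, hABy]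
    _ = _ := by
      rw [hA.inner_apply_self_eq_sum_eigenvalues_mul_sq hn]
      refine Finset.sum_congr rfl fun i _ => ?_
      have hrepr := hA.eigenvectorBasis_apply_self_apply hn (B y) i
      rw [hABy, RCLike.ofReal_real_eq_id, id_eq] at hrepr
      rw [hrepr]
      field_simp [(hA.eigenvalues_pos_of_inner_pos hn hpos i).ne']

end LinearMap.IsSymmetric

theorem integral_cexp_neg_pi_sum_mul_sq_mul_cexp_sum {ι : Type*} [Fintype ι] {μ : ι → ℝ}
    (hμ : ∀ i, 0 < μ i) (η : ι → ℝ) :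
    ∫ v : ι → ℝ, Complex.exp (-(π : ℂ) * ∑ i, (μ i * v i ^ 2 : ℝ)) *
        Complex.exp (-2 * (π : ℂ) * Complex.I * ∑ i, (v i * η i : ℝ))
      = (((∏ i, μ i) ^ (-(1 / 2 : ℝ)) : ℝ) : ℂ) *
          Complex.exp (-(π : ℂ) * ∑ i, (η i ^ 2 / μ i : ℝ)) := by
  have hπ : (π : ℂ) ≠ 0 := Complex.ofReal_ne_zero.mpr pi_ne_zero
  have hb : ∀ i, 0 < ((π : ℂ) * μ i).re := fun i => by
    simpa using mul_pos pi_pos (hμ i)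
  have hsqrt : ∀ i, ((π : ℂ) / (π * μ i)) ^ (1 / 2 : ℂ) = ((μ i ^ (-(1 / 2 : ℝ)) : ℝ) : ℂ) := by
    intro i
    rw [div_mul_cancel_left₀ hπ, Real.rpow_neg (hμ i).le, ← Real.inv_rpow (hμ i).le,
      Complex.ofReal_cpow (inv_nonneg.mpr (hμ i).le)]
    push_cast
    rfl
  have hexp : ∀ i, (-2 * (π : ℂ) * Complex.I * η i) ^ 2 / (4 * (π * μ i)) =
      -π * (η i ^ 2 / μ i : ℝ) := by
    intro i
    have hμi : (μ i : ℂ) ≠ 0 := Complex.ofReal_ne_zero.mpr (hμ i).ne'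
    push_cast
    field_simp
    rw [Complex.I_sq]
    ring
  calc _ = ∫ v : ι → ℝ, Complex.exp (-∑ i, (π * μ i : ℂ) * (v i : ℂ) ^ 2 +
        ∑ i, (-2 * π * Complex.I * η i : ℂ) * v i) := by
        congr 1 with v
        rw [← Complex.exp_add]
        push_cast
        rw [Finset.mul_sum, Finset.mul_sum, ← Finset.sum_neg_distrib]
        congr 2 <;> refine Finset.sum_congr rfl fun i _ => by ring
    _ = _ := by
        simp only [GaussianFourier.integral_cexp_neg_sum_mul_add hb, Finset.prod_mul_distrib,
          ← Complex.exp_sum, hsqrt, hexp, ← Complex.ofReal_prod, ← Finset.mul_sum,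
          Real.finsetProd_rpow _ _ fun i _ => (hμ i).le]
        push_cast
        rfl

theorem integral_cexp_neg_pi_inner_apply_self_mul_cexp_inner {E : Type*} [NormedAddCommGroup E]
    [InnerProductSpace ℝ E] [FiniteDimensional ℝ E] [MeasurableSpace E] [BorelSpace E]
    {A B : E →ₗ[ℝ] E} (hA : A.IsSymmetric) (hpos : ∀ x, x ≠ 0 → 0 < ⟪A x, x⟫)
    (hAB : A ∘ₗ B = LinearMap.id) (ξ : E) :
    ∫ x : E, Complex.exp (-(π : ℂ) * (⟪A x, x⟫ : ℂ)) *
        Complex.exp (-2 * (π : ℂ) * Complex.I * (⟪x, ξ⟫ : ℂ))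
      = ((LinearMap.det A ^ (-(1 / 2 : ℝ)) : ℝ) : ℂ) *
          Complex.exp (-(π : ℂ) * (⟪B ξ, ξ⟫ : ℂ)) := by
  rw [hA.det_eq_prod_eigenvalues rfl, hA.inner_apply_self_eq_sum_sq_div_eigenvalues rfl hpos hAB]
  simp only [RCLike.ofReal_real_eq_id, id_eq]
  rw [← integral_cexp_neg_pi_sum_mul_sq_mul_cexp_sum (hA.eigenvalues_pos_of_inner_pos rfl hpos),
    ← (hA.eigenvectorBasis rfl).integral_comp_repr]
  simp_rw [hA.inner_apply_self_eq_sum_eigenvalues_mul_sq rfl,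
    (hA.eigenvectorBasis rfl).real_inner_eq_sum_repr_mul]

theorem fourier_gaussian_posdef_general (n : ℕ)
    (A B : EuclideanSpace ℝ (Fin n) →ₗ[ℝ] EuclideanSpace ℝ (Fin n))
    (hA : IsPosDefSymm A)
    (hB₁ : A ∘ₗ B = LinearMap.id)
    (ξ : EuclideanSpace ℝ (Fin n)) :
    FT (fun x => Complex.exp (-(Real.pi : ℂ) * (⟪A x, x⟫ : ℂ))) ξ
      = ((LinearMap.det A ^ (-(1/2 : ℝ)) : ℝ) : ℂ) *
          Complex.exp (-(Real.pi : ℂ) * (⟪B ξ, ξ⟫ : ℂ)) :=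
  integral_cexp_neg_pi_inner_apply_self_mul_cexp_inner hA.1 hA.2 hB₁ ξ

/-- If `A` is positive-definite symmetric with inverse `B`, then the Fourier
transform of `x ↦ exp (−π ⟨A x, x⟩)` is `ξ ↦ (det A)^(−1/2) · exp (−π ⟨A⁻¹ ξ, ξ⟩)`. -/
theorem fourier_gaussian_posdef (n : ℕ)
    (A B : EuclideanSpace ℝ (Fin n) →ₗ[ℝ] EuclideanSpace ℝ (Fin n))
    (hA : IsPosDefSymm A)
    (hB₁ : A ∘ₗ B = LinearMap.id) (hB₂ : B ∘ₗ A = LinearMap.id)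
    (ξ : EuclideanSpace ℝ (Fin n)) :
    FT (fun x => Complex.exp (-(Real.pi : ℂ) * (⟪A x, x⟫ : ℂ))) ξ
      = ((LinearMap.det A ^ (-(1/2 : ℝ)) : ℝ) : ℂ) *
          Complex.exp (-(Real.pi : ℂ) * (⟪B ξ, ξ⟫ : ℂ)) :=
  fourier_gaussian_posdef_general n A B hA hB₁ ξ
end

section
/- If f : ℝⁿ → ℂ is a nice function, then its Fourier transform f̂ is again a nice function on ℝⁿ. -/
open MeasureTheory Real
open scoped RealInnerProductSpace

/-!
Since the Fourier transform is linear on integrable functions and nice functions are integrable,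
it suffices to transform a single building block. For a pure Gaussian
`exp (-⟪A x, x⟫ + b·x)`, diagonalising `A` in an orthonormal eigenbasis splits the integral
into one-dimensional Gaussian integrals, and the result is again such a Gaussian, for the
operator `π² A⁻¹`. The monomial factor `x^α` is handled by induction on `α`: multiplication by
`x_k` becomes `(-2πi)⁻¹ ∂_k` on the Fourier side, and nice functions are closed under `∂_k`,
because by the Leibniz rule `∂_k` of a building block is a combination of building blocks.
-/

open scoped FourierTransform
open Complex (I)

lemma exists_pos_forall_le {ι : Type*} [Finite ι] {μ : ι → ℝ} (hμ : ∀ i, 0 < μ i) :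
    ∃ l, 0 < l ∧ ∀ i, l ≤ μ i := by
  cases isEmpty_or_nonempty ι
  · exact ⟨1, one_pos, fun i => isEmptyElim i⟩
  · obtain ⟨i₀, hi₀⟩ := Finite.exists_min μ
    exact ⟨μ i₀, hμ i₀, hi₀⟩

lemma Pi.induction_add_single {ι : Type*} [Finite ι] [DecidableEq ι] {p : (ι → ℕ) → Prop}
    (zero : p 0) (add_single : ∀ α i, p α → p (α + Pi.single i 1)) (α : ι → ℕ) : p α := by
  suffices h : ∀ β α, p α → p (α + β) by simpa using h α 0 zero
  intro β
  induction β using Pi.single_induction with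
  | zero => simp
  | add f g hf hg => exact fun α hα => add_assoc α f g ▸ hg _ (hf α hα)
  | single i m =>
    induction m with
    | zero => simp
    | succ m ih =>
      intro α hα
      rw [Pi.single_add, ← add_assoc]
      exact add_single _ i (ih α hα)

lemma pow_mul_exp_le_mul_exp {m : ℕ} {C l t : ℝ} (hl : 0 < l) (ht : 0 ≤ t) :
    t ^ m * Real.exp (C * t - l * t ^ 2)
      ≤ m.factorial * Real.exp ((C + 1) ^ 2 / (2 * l)) * Real.exp (-(l / 2) * t ^ 2) := by
  have hpow : t ^ m ≤ m.factorial * Real.exp t := by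
    have := Real.pow_div_factorial_le_exp t ht m
    rwa [div_le_iff₀ (by positivity), mul_comm] at this
  have hsq : (C + 1) * t - l * t ^ 2 ≤ (C + 1) ^ 2 / (2 * l) + -(l / 2) * t ^ 2 := by
    rw [div_add' _ _ _ (by positivity), le_div_iff₀ (by positivity)]
    nlinarith [sq_nonneg (l * t - (C + 1))]
  calc t ^ m * Real.exp (C * t - l * t ^ 2)
      ≤ m.factorial * Real.exp t * Real.exp (C * t - l * t ^ 2) := by gcongr
    _ = m.factorial * Real.exp ((C + 1) * t - l * t ^ 2) := by
      rw [mul_assoc, ← Real.exp_add]; ring_nf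
    _ ≤ m.factorial * Real.exp ((C + 1) ^ 2 / (2 * l) + -(l / 2) * t ^ 2) := by gcongr
    _ = _ := by rw [Real.exp_add, mul_assoc]

section InnerProductSpace

variable {V : Type*} [NormedAddCommGroup V] [InnerProductSpace ℝ V] {ι : Type*} [Fintype ι]

noncomputable def OrthonormalBasis.diagonalOperator (B : OrthonormalBasis ι ℝ V) (w : ι → ℝ) :
    V →ₗ[ℝ] V :=
  ∑ i, w i • (innerₗ V (B i)).smulRight (B i)

lemma OrthonormalBasis.inner_diagonalOperator_apply (B : OrthonormalBasis ι ℝ V) (w : ι → ℝ)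
    (x y : V) : ⟪B.diagonalOperator w x, y⟫ = ∑ i, w i * ⟪B i, x⟫ * ⟪B i, y⟫ := by
  simp [OrthonormalBasis.diagonalOperator, sum_inner, real_inner_smul_left, mul_assoc]

variable [FiniteDimensional ℝ V]

lemma LinearMap.IsSymmetric.inner_apply_self_eq_sum {T : V →ₗ[ℝ] V} (hT : T.IsSymmetric)
    {n : ℕ} (hn : Module.finrank ℝ V = n) (x : V) :
    ⟪T x, x⟫ = ∑ i, hT.eigenvalues hn i * ⟪hT.eigenvectorBasis hn i, x⟫ ^ 2 := by
  rw [← (hT.eigenvectorBasis hn).sum_inner_mul_inner]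
  refine Finset.sum_congr rfl fun i _ => ?_
  rw [hT, hT.apply_eigenvectorBasis, real_inner_smul_right, real_inner_comm]
  simp only [RCLike.ofReal_real_eq_id, id_eq]
  ring

variable [MeasurableSpace V] [BorelSpace V]

theorem OrthonormalBasis.integral_cexp_neg_sum_mul_sq_inner_add (B : OrthonormalBasis ι ℝ V)
    {μ : ι → ℝ} (hμ : ∀ i, 0 < μ i) (ℓ : V →ₗ[ℝ] ℂ) :
    ∫ x, Complex.exp (-∑ i, (μ i : ℂ) * (⟪B i, x⟫ : ℂ) ^ 2 + ℓ x)
      = ∏ i, (π / μ i : ℂ) ^ (1 / 2 : ℂ) * Complex.exp (ℓ (B i) ^ 2 / (4 * μ i)) := by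
  rw [← B.measurePreserving_repr_symm.integral_comp B.repr.symm.toHomeomorph.measurableEmbedding,
    ← (PiLp.volume_preserving_toLp ι).integral_comp
      (MeasurableEquiv.toLp 2 _).measurableEmbedding]
  have hℓ : ∀ v : ι → ℝ, ℓ (B.repr.symm (WithLp.toLp 2 v)) = ∑ i, ℓ (B i) * v i := fun v => by
    simp [← B.sum_repr_symm, map_sum, mul_comm]
  simp only [hℓ, ← B.repr_apply_apply, LinearIsometryEquiv.apply_symm_apply]
  exact GaussianFourier.integral_cexp_neg_sum_mul_add (fun i => by simpa using hμ i) _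

theorem OrthonormalBasis.fourier_cexp_neg_sum_mul_sq_inner_add (B : OrthonormalBasis ι ℝ V)
    {μ : ι → ℝ} (hμ : ∀ i, 0 < μ i) (ℓ : V →ₗ[ℝ] ℂ) (ξ : V) :
    𝓕 (fun x => Complex.exp (-∑ i, (μ i : ℂ) * (⟪B i, x⟫ : ℂ) ^ 2 + ℓ x)) ξ
      = ∏ i, (π / μ i : ℂ) ^ (1 / 2 : ℂ) *
          Complex.exp ((ℓ (B i) - 2 * π * I * ⟪B i, ξ⟫) ^ 2 / (4 * μ i)) := by
  let ℓξ : V →ₗ[ℝ] ℂ := ℓ - (2 * π * I) • (Complex.ofRealCLM.toLinearMap ∘ₗ innerₗ V ξ)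
  have hℓξ : ∀ x, ℓξ x = ℓ x - 2 * π * I * ⟪x, ξ⟫ := fun x => by
    simp [ℓξ, real_inner_comm]
  convert B.integral_cexp_neg_sum_mul_sq_inner_add hμ ℓξ using 1
  · rw [Real.fourier_eq']
    congr 1 with x
    rw [smul_eq_mul, ← Complex.exp_add, hℓξ]
    push_cast
    ring_nf
  · simp only [hℓξ, real_inner_comm]

lemma fourier_add_of_integrable {f g : V → ℂ} (hf : Integrable f) (hg : Integrable g) :
    𝓕 (f + g) = 𝓕 f + 𝓕 g :=
  VectorFourier.fourierIntegral_add Real.continuous_fourierChar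
    (continuous_fst.inner continuous_snd) hf hg

lemma fourier_const_smul (c : ℂ) (f : V → ℂ) : 𝓕 (c • f) = c • 𝓕 f :=
  VectorFourier.fourierIntegral_const_smul _ _ _ f c

end InnerProductSpace

section Euclidean

variable {n : ℕ}

local notation "𝔼" => EuclideanSpace ℝ (Fin n)

lemma IsPosDefSymm.isSymmetric {A : 𝔼 →ₗ[ℝ] 𝔼} (hA : IsPosDefSymm A) : A.IsSymmetric := hA.1

lemma IsPosDefSymm.eigenvalues_pos {A : 𝔼 →ₗ[ℝ] 𝔼} (hA : IsPosDefSymm A) (i : Fin n) :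
    0 < hA.isSymmetric.eigenvalues finrank_euclideanSpace_fin i := by
  have hB := (hA.isSymmetric.eigenvectorBasis finrank_euclideanSpace_fin).orthonormal
  simpa [real_inner_smul_left, hB.1 i] using hA.2 _ (hB.ne_zero i)

lemma IsPosDefSymm.exists_pos_mul_sq_norm_le {A : 𝔼 →ₗ[ℝ] 𝔼} (hA : IsPosDefSymm A) :
    ∃ l, 0 < l ∧ ∀ x, l * ‖x‖ ^ 2 ≤ ⟪A x, x⟫ := by
  obtain ⟨l, hl, hlμ⟩ := exists_pos_forall_le hA.eigenvalues_pos
  refine ⟨l, hl, fun x => ?_⟩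
  rw [hA.isSymmetric.inner_apply_self_eq_sum finrank_euclideanSpace_fin,
    ← (hA.isSymmetric.eigenvectorBasis finrank_euclideanSpace_fin).sum_sq_inner_right,
    Finset.mul_sum]
  exact Finset.sum_le_sum fun i _ => mul_le_mul_of_nonneg_right (hlμ i) (sq_nonneg _)

lemma OrthonormalBasis.isPosDefSymm_diagonalOperator {ι : Type*} [Fintype ι]
    (B : OrthonormalBasis ι ℝ 𝔼) {w : ι → ℝ} (hw : ∀ i, 0 < w i) :
    IsPosDefSymm (B.diagonalOperator w) := by
  refine ⟨fun x y => ?_, fun x hx => ?_⟩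
  · rw [B.inner_diagonalOperator_apply, real_inner_comm, B.inner_diagonalOperator_apply]
    exact Finset.sum_congr rfl fun i _ => by ring
  · obtain ⟨l, hl, hlw⟩ := exists_pos_forall_le hw
    calc 0 < l * ‖x‖ ^ 2 := by positivity
      _ = ∑ i, l * ⟪B i, x⟫ ^ 2 := by rw [← Finset.mul_sum, B.sum_sq_inner_right]
      _ ≤ ⟪B.diagonalOperator w x, x⟫ := by
        rw [B.inner_diagonalOperator_apply]
        refine Finset.sum_le_sum fun i _ => ?_
        rw [mul_assoc, ← sq]
        exact mul_le_mul_of_nonneg_right (hlw i) (sq_nonneg _)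

noncomputable def dotL (b : Fin n → ℂ) : 𝔼 →ₗ[ℝ] ℂ where
  toFun x := ∑ j, b j * x j
  map_add' x y := by simp [mul_add, Finset.sum_add_distrib]
  map_smul' c x := by simp [Finset.mul_sum, mul_left_comm]

@[simp] lemma dotL_apply (b : Fin n → ℂ) (x : 𝔼) : dotL b x = ∑ j, b j * x j := rfl

lemma dotL_single (b : Fin n → ℂ) (j : Fin n) : dotL b (EuclideanSpace.single j 1) = b j := by
  simp [apply_ite, Finset.sum_ite_eq']

lemma dotL_eval_single (ℓ : 𝔼 →ₗ[ℝ] ℂ) :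
    dotL (fun j => ℓ (EuclideanSpace.single j 1)) = ℓ := by
  ext x
  conv_rhs => rw [← (EuclideanSpace.basisFun (Fin n) ℝ).sum_repr x]
  simp [map_sum, mul_comm]

lemma buildingBlock_zero_apply (A : 𝔼 →ₗ[ℝ] 𝔼) (b : Fin n → ℂ) (x : 𝔼) :
    buildingBlock 0 A b x = Complex.exp (-(⟪A x, x⟫ : ℂ) + dotL b x) := by
  simp [buildingBlock]

lemma buildingBlock_add_single (α : Fin n → ℕ) (A : 𝔼 →ₗ[ℝ] 𝔼) (b : Fin n → ℂ) (k : Fin n) :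
    buildingBlock (α + Pi.single k 1) A b = fun x => (x k : ℂ) * buildingBlock α A b x := by
  ext x
  simp only [buildingBlock, Pi.add_apply, pow_add, Finset.prod_mul_distrib]
  simp [Pi.single_apply]
  ring

lemma differentiable_buildingBlock (α : Fin n → ℕ) (A : 𝔼 →ₗ[ℝ] 𝔼) (b : Fin n → ℂ) :
    Differentiable ℝ (buildingBlock α A b) := by
  have hQ : Differentiable ℝ fun x : 𝔼 => ⟪A x, x⟫ :=
    A.toContinuousLinearMap.differentiable.inner ℝ differentiable_id
  have hcoord (j : Fin n) : Differentiable ℝ fun x : 𝔼 => x j :=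
    (EuclideanSpace.proj (𝕜 := ℝ) (ι := Fin n) j).differentiable
  unfold buildingBlock
  fun_prop

lemma norm_buildingBlock_le (α : Fin n → ℕ) (A : 𝔼 →ₗ[ℝ] 𝔼) (b : Fin n → ℂ) (x : 𝔼) :
    ‖buildingBlock α A b x‖ ≤
      ‖x‖ ^ (∑ j, α j) * Real.exp ((∑ j, ‖b j‖) * ‖x‖ - ⟪A x, x⟫) := by
  have hcoord : ∀ j, ‖(x j : ℂ)‖ ≤ ‖x‖ := fun j => by
    simpa using PiLp.norm_apply_le x j
  rw [buildingBlock, norm_mul, Complex.norm_exp, norm_prod, ← Finset.prod_pow_eq_pow_sum]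
  gcongr with j
  · simpa using pow_le_pow_left₀ (norm_nonneg _) (hcoord j) (α j)
  · rw [Complex.add_re, Complex.neg_re, Complex.ofReal_re, Complex.re_sum, Finset.sum_mul]
    rw [neg_add_eq_sub, sub_le_sub_iff_right]
    gcongr with j
    calc (b j * x j).re ≤ ‖b j * x j‖ := Complex.re_le_norm _
      _ ≤ ‖b j‖ * ‖x‖ := by rw [norm_mul]; gcongr; exact hcoord j

lemma isNice_buildingBlock {α : Fin n → ℕ} {A : 𝔼 →ₗ[ℝ] 𝔼} (hA : IsPosDefSymm A)
    (b : Fin n → ℂ) : IsNice (buildingBlock α A b) :=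
  Submodule.subset_span ⟨α, A, b, hA, rfl⟩

lemma isNice_zero : IsNice fun _ : 𝔼 => (0 : ℂ) := Submodule.zero_mem _

lemma IsNice.add {f g : 𝔼 → ℂ} (hf : IsNice f) (hg : IsNice g) : IsNice fun x => f x + g x :=
  Submodule.add_mem _ hf hg

lemma IsNice.const_mul {f : 𝔼 → ℂ} (hf : IsNice f) (c : ℂ) : IsNice fun x => c * f x :=
  Submodule.smul_mem _ c hf

lemma IsNice.sum {ι : Type*} (s : Finset ι) {f : ι → 𝔼 → ℂ} (hf : ∀ i ∈ s, IsNice (f i)) :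
    IsNice fun x => ∑ i ∈ s, f i x := by
  rw [← Finset.sum_fn]
  exact Submodule.sum_mem _ hf

lemma isNice_cexp_neg_inner_add {A : 𝔼 →ₗ[ℝ] 𝔼} (hA : IsPosDefSymm A) (ℓ : 𝔼 →ₗ[ℝ] ℂ) :
    IsNice fun x => Complex.exp (-(⟪A x, x⟫ : ℂ) + ℓ x) := by
  convert isNice_buildingBlock (α := 0) hA (fun j => ℓ (EuclideanSpace.single j 1)) using 1
  ext x
  rw [buildingBlock_zero_apply, dotL_eval_single]

lemma IsNice.coord_mul {g : 𝔼 → ℂ} (hg : IsNice g) (k : Fin n) :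
    IsNice fun x => (x k : ℂ) * g x := by
  induction hg using Submodule.span_induction with
  | mem g hg =>
    obtain ⟨α, A, b, hA, rfl⟩ := hg
    rw [← buildingBlock_add_single]
    exact isNice_buildingBlock hA b
  | zero => simpa using isNice_zero
  | add f g _ _ hf hg => simpa [mul_add] using hf.add hg
  | smul c g _ hg => simpa [mul_left_comm] using hg.const_mul c

lemma IsNice.inner_mul {g : 𝔼 → ℂ} (hg : IsNice g) (u : 𝔼) :
    IsNice fun x => (⟪u, x⟫ : ℂ) * g x := by
  simp only [PiLp.inner_apply, RCLike.inner_apply, conj_trivial, Complex.ofReal_sum,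
    Complex.ofReal_mul, Finset.sum_mul, mul_assoc]
  exact IsNice.sum _ fun k _ => by simpa only [mul_left_comm] using (hg.coord_mul k).const_mul (u k)

lemma integrable_norm_pow_mul_norm_buildingBlock {A : 𝔼 →ₗ[ℝ] 𝔼} (hA : IsPosDefSymm A)
    (α : Fin n → ℕ) (b : Fin n → ℂ) (k : ℕ) :
    Integrable fun x : 𝔼 => ‖x‖ ^ k * ‖buildingBlock α A b x‖ := by
  obtain ⟨l, hl, hlA⟩ := hA.exists_pos_mul_sq_norm_le
  set C := ∑ j, ‖b j‖
  have hbound (x : 𝔼) : ‖x‖ ^ k * ‖buildingBlock α A b x‖ ≤ (k + ∑ j, α j).factorial *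
      Real.exp ((C + 1) ^ 2 / (2 * l)) * Real.exp (-(l / 2) * ‖x‖ ^ 2) :=
    calc ‖x‖ ^ k * ‖buildingBlock α A b x‖
        ≤ ‖x‖ ^ k * (‖x‖ ^ (∑ j, α j) * Real.exp (C * ‖x‖ - ⟪A x, x⟫)) := by
          gcongr; exact norm_buildingBlock_le α A b x
      _ ≤ ‖x‖ ^ (k + ∑ j, α j) * Real.exp (C * ‖x‖ - l * ‖x‖ ^ 2) := by
          rw [pow_add, mul_assoc]; gcongr; exact hlA x
      _ ≤ _ := pow_mul_exp_le_mul_exp hl (norm_nonneg x)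
  have hgauss := (GaussianFourier.integrable_cexp_neg_mul_sq_norm_add (V := 𝔼)
    (b := (l / 2 : ℝ)) (by simpa using hl) 0 0).norm.const_mul
    ((k + ∑ j, α j).factorial * Real.exp ((C + 1) ^ 2 / (2 * l)))
  have hcont := (differentiable_buildingBlock α A b).continuous
  refine hgauss.mono' (by fun_prop) (.of_forall fun x => ?_)
  rw [Real.norm_of_nonneg (by positivity)]
  convert hbound x using 2
  simp [Complex.norm_exp, ← Complex.ofReal_pow]

lemma IsNice.integrable {g : 𝔼 → ℂ} (hg : IsNice g) : Integrable g := by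
  induction hg using Submodule.span_induction with
  | mem g hg =>
    obtain ⟨α, A, b, hA, rfl⟩ := hg
    have hmeas : AEStronglyMeasurable (buildingBlock α A b) :=
      (differentiable_buildingBlock α A b).continuous.aestronglyMeasurable
    exact (integrable_norm_iff hmeas).1
      (by simpa using integrable_norm_pow_mul_norm_buildingBlock hA α b 0)
  | zero => exact integrable_zero _ _ _
  | add f g _ _ hf hg => exact hf.add hg
  | smul c g _ hg => exact hg.smul c

lemma pderivCoord_add {f g : 𝔼 → ℂ} (hf : Differentiable ℝ f) (hg : Differentiable ℝ g)
    (j : Fin n) :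
    pderivCoord j (fun x => f x + g x) = fun x => pderivCoord j f x + pderivCoord j g x := by
  ext x
  simp [pderivCoord, fderiv_fun_add (hf x) (hg x)]

lemma pderivCoord_const_mul {f : 𝔼 → ℂ} (hf : Differentiable ℝ f) (c : ℂ) (j : Fin n) :
    pderivCoord j (fun x => c * f x) = fun x => c * pderivCoord j f x := by
  ext x
  simp [pderivCoord, fderiv_const_mul (hf x) c]

lemma pderivCoord_mul {f g : 𝔼 → ℂ} (hf : Differentiable ℝ f) (hg : Differentiable ℝ g)
    (j : Fin n) :
    pderivCoord j (fun x => f x * g x)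
      = fun x => pderivCoord j f x * g x + f x * pderivCoord j g x := by
  ext x
  simp [pderivCoord, fderiv_fun_mul (hf x) (hg x)]
  ring

lemma pderivCoord_coord (j k : Fin n) :
    pderivCoord j (fun x : 𝔼 => (x k : ℂ))
      = fun _ => ((EuclideanSpace.single j (1 : ℝ) : 𝔼) k : ℂ) := by
  ext x
  have h : HasFDerivAt (fun x : 𝔼 => (x k : ℂ))
      (Complex.ofRealCLM.comp (EuclideanSpace.proj k)) x :=
    (Complex.ofRealCLM.comp (EuclideanSpace.proj k)).hasFDerivAt
  rw [pderivCoord, h.fderiv]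
  rfl

lemma pderivCoord_cexp_neg_inner_add {A : 𝔼 →ₗ[ℝ] 𝔼} (hA : A.IsSymmetric) (ℓ : 𝔼 →ₗ[ℝ] ℂ)
    (j : Fin n) :
    pderivCoord j (fun x => Complex.exp (-(⟪A x, x⟫ : ℂ) + ℓ x))
      = fun x => (ℓ (EuclideanSpace.single j 1) - 2 * ⟪A (EuclideanSpace.single j 1), x⟫) *
          Complex.exp (-(⟪A x, x⟫ : ℂ) + ℓ x) := by
  ext x
  have hQ := (A.toContinuousLinearMap.hasFDerivAt (x := x)).inner ℝ (hasFDerivAt_id x)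
  have hE : HasFDerivAt (fun x : 𝔼 => Complex.exp (-(⟪A x, x⟫ : ℂ) + ℓ x)) _ x :=
    ((Complex.ofRealCLM.hasFDerivAt.comp x hQ).neg.add ℓ.toContinuousLinearMap.hasFDerivAt).cexp
  rw [pderivCoord, hE.fderiv]
  simp [hA _ x, real_inner_comm]
  ring

lemma IsNice.differentiable {g : 𝔼 → ℂ} (hg : IsNice g) : Differentiable ℝ g := by
  induction hg using Submodule.span_induction with
  | mem g hg =>
    obtain ⟨α, A, b, -, rfl⟩ := hg
    exact differentiable_buildingBlock α A b
  | zero => exact differentiable_const 0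
  | add f g _ _ hf hg => exact hf.add hg
  | smul c g _ hg => exact hg.const_smul c

lemma isNice_pderivCoord_buildingBlock {A : 𝔼 →ₗ[ℝ] 𝔼} (hA : IsPosDefSymm A) (b : Fin n → ℂ)
    (j : Fin n) (α : Fin n → ℕ) : IsNice (pderivCoord j (buildingBlock α A b)) := by
  induction α using Pi.induction_add_single with
  | zero =>
    have hG := isNice_cexp_neg_inner_add hA (dotL b)
    rw [show buildingBlock 0 A b = _ from funext (buildingBlock_zero_apply A b),
      pderivCoord_cexp_neg_inner_add hA.isSymmetric]
    convert (hG.const_mul (b j)).add ((hG.inner_mul (A (EuclideanSpace.single j 1))).const_mul (-2))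
      using 2
    rw [dotL_single]
    ring
  | add_single α k ih =>
    rw [buildingBlock_add_single,
      pderivCoord_mul (by fun_prop) (differentiable_buildingBlock α A b), pderivCoord_coord]
    exact ((isNice_buildingBlock hA b).const_mul _).add (ih.coord_mul k)

lemma IsNice.pderivCoord {g : 𝔼 → ℂ} (hg : IsNice g) (j : Fin n) :
    IsNice (pderivCoord j g) := by
  induction hg using Submodule.span_induction with
  | mem g hg =>
    obtain ⟨α, A, b, hA, rfl⟩ := hg
    exact isNice_pderivCoord_buildingBlock hA b j α
  | zero =>
    convert isNice_zero using 1
    ext x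
    simp [_root_.pderivCoord]
  | add f g hf hg ihf ihg =>
    rw [Pi.add_def, pderivCoord_add (IsNice.differentiable hf) (IsNice.differentiable hg)]
    exact ihf.add ihg
  | smul c g hg ih =>
    rw [Pi.smul_def]
    simp only [smul_eq_mul, pderivCoord_const_mul (IsNice.differentiable hg)]
    exact ih.const_mul c

lemma FT_eq_fourier (f : 𝔼 → ℂ) : FT f = 𝓕 f := by
  ext ξ
  rw [Real.fourier_eq', FT]
  congr 1 with x
  rw [smul_eq_mul, mul_comm]
  push_cast
  ring_nf

lemma pderivCoord_fourier {f : 𝔼 → ℂ} (hf : Integrable f)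
    (hf' : Integrable fun v => ‖v‖ * ‖f v‖) (j : Fin n) :
    pderivCoord j (𝓕 f) = (-(2 * π * I)) • 𝓕 (fun v => (v j : ℂ) * f v) := by
  have hint : Integrable (VectorFourier.fourierSMulRight (innerSL ℝ) f) := by
    refine (hf'.const_mul (2 * π)).mono' hf.aestronglyMeasurable.fourierSMulRight
      (.of_forall fun v => ?_)
    rw [VectorFourier.norm_fourierSMulRight, innerSL_apply_norm, mul_assoc]
  have hcoord :
      (fun v => VectorFourier.fourierSMulRight (innerSL ℝ) f v (EuclideanSpace.single j 1))
        = (-(2 * π * I)) • fun v => (v j : ℂ) * f v := by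
    ext v
    rw [VectorFourier.fourierSMulRight_apply, innerSL_apply_apply,
      EuclideanSpace.inner_single_right]
    simp
  ext ξ
  rw [_root_.pderivCoord, Real.fderiv_fourier hf hf', Real.fourier_continuousLinearMap_apply hint,
    hcoord]
  exact congrFun (fourier_const_smul _ _) ξ

theorem isNice_fourier_buildingBlock_zero {A : 𝔼 →ₗ[ℝ] 𝔼} (hA : IsPosDefSymm A)
    (b : Fin n → ℂ) : IsNice (𝓕 (buildingBlock 0 A b)) := by
  set B := hA.isSymmetric.eigenvectorBasis finrank_euclideanSpace_fin
  set μ := hA.isSymmetric.eigenvalues finrank_euclideanSpace_fin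
  have hμ : ∀ i, 0 < μ i := hA.eigenvalues_pos
  have hA_diag : buildingBlock 0 A b
      = fun x => Complex.exp (-∑ i, (μ i : ℂ) * (⟪B i, x⟫ : ℂ) ^ 2 + dotL b x) := by
    ext x
    rw [buildingBlock_zero_apply, hA.isSymmetric.inner_apply_self_eq_sum finrank_euclideanSpace_fin]
    push_cast
    rfl
  set c := fun i => dotL b (B i)
  -- the transform is the Gaussian of `π² A⁻¹`, which is diagonal in `B` with eigenvalues `π² / μ i`
  let ℓ : 𝔼 →ₗ[ℝ] ℂ :=
    ∑ i, (-π * I * c i / μ i) • (Complex.ofRealCLM.toLinearMap ∘ₗ innerₗ 𝔼 (B i))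
  have hFT : 𝓕 (buildingBlock 0 A b)
      = (∏ i, (π / μ i : ℂ) ^ (1 / 2 : ℂ) * Complex.exp (c i ^ 2 / (4 * μ i))) •
        fun ξ => Complex.exp (-(⟪B.diagonalOperator (fun i => π ^ 2 / μ i) ξ, ξ⟫ : ℂ) + ℓ ξ) := by
    ext ξ
    rw [hA_diag, B.fourier_cexp_neg_sum_mul_sq_inner_add hμ, Pi.smul_apply, smul_eq_mul,
      B.inner_diagonalOperator_apply, Finset.prod_mul_distrib, Finset.prod_mul_distrib,
      ← Complex.exp_sum, ← Complex.exp_sum, mul_assoc _ (Complex.exp _), ← Complex.exp_add]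
    congr 2
    simp only [ℓ, LinearMap.sum_apply, LinearMap.smul_apply, LinearMap.comp_apply,
      innerₗ_apply_apply, ContinuousLinearMap.coe_coe, Complex.ofRealCLM_apply, smul_eq_mul]
    push_cast
    rw [← Finset.sum_neg_distrib, ← Finset.sum_add_distrib, ← Finset.sum_add_distrib]
    refine Finset.sum_congr rfl fun i _ => ?_
    have : (μ i : ℂ) ≠ 0 := by exact_mod_cast (hμ i).ne'
    field_simp
    linear_combination (4 * π ^ 2 * (⟪B i, ξ⟫ : ℂ) ^ 2) * Complex.I_sq
  have hA' : IsPosDefSymm (B.diagonalOperator fun i => π ^ 2 / μ i) :=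
    B.isPosDefSymm_diagonalOperator fun i => div_pos (by positivity) (hμ i)
  rw [hFT]
  exact Submodule.smul_mem _ _ (isNice_cexp_neg_inner_add hA' ℓ)

theorem isNice_fourier_buildingBlock {A : 𝔼 →ₗ[ℝ] 𝔼} (hA : IsPosDefSymm A) (b : Fin n → ℂ)
    (α : Fin n → ℕ) : IsNice (𝓕 (buildingBlock α A b)) := by
  induction α using Pi.induction_add_single with
  | zero => exact isNice_fourier_buildingBlock_zero hA b
  | add_single α k ih =>
    have hc : (-(2 * π * I) : ℂ) ≠ 0 := by simp [Real.pi_ne_zero, Complex.I_ne_zero]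
    have hα := integrable_norm_pow_mul_norm_buildingBlock hA α b
    rw [buildingBlock_add_single, ← inv_smul_smul₀ hc (𝓕 _),
      ← pderivCoord_fourier (IsNice.integrable (isNice_buildingBlock hA b)) (by simpa using hα 1)]
    exact (ih.pderivCoord k).const_mul _

end Euclidean

/-- The Fourier transform of a nice function is nice. -/
theorem isNice_fourier_transform (n : ℕ)
    (f : EuclideanSpace ℝ (Fin n) → ℂ) (hf : IsNice f) :
    IsNice (FT f) := by
  rw [FT_eq_fourier]
  induction hf using Submodule.span_induction with
  | mem g hg =>
    obtain ⟨α, A, b, hA, rfl⟩ := hg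
    exact isNice_fourier_buildingBlock hA b α
  | zero =>
    convert isNice_zero using 1
    ext ξ
    simp [Real.fourier_eq]
  | add f g hf hg ihf ihg =>
    rw [fourier_add_of_integrable (IsNice.integrable hf) (IsNice.integrable hg)]
    exact ihf.add ihg
  | smul c g _ ih =>
    rw [fourier_const_smul]
    exact ih.const_mul c
end
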